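/- arXiv:1707.05857 — 3 statements merged into one kernel-verified Lean document; each statement's English description precedes it below -/
import Mathlib

section
/- If X ~ ESEP(θ, σ, ε, α) with r a positive even integer, then E[(X−θ)^r] = 2^{r/2} σ^r Γ((r+1)/α) [(1+ε)^{r+1} + (1−ε)^{r+1}] / (2 Γ(1/α)). -/
open Real MeasureTheory

/-- The ESEP density. -/
noncomputable def esepPDF (θ σ ε α : ℝ) (x : ℝ) : ℝ :=
  if x < θ then
    α / (2 * Real.sqrt 2 * σ * Real.Gamma (1 / α)) *
      Real.exp (-(((θ - x) / (Real.sqrt 2 * (1 + ε) * σ)) ^ α))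
  else
    α / (2 * Real.sqrt 2 * σ * Real.Gamma (1 / α)) *
      Real.exp (-(((x - θ) / (Real.sqrt 2 * (1 - ε) * σ)) ^ α))

/-!
After centring at `θ` and reflecting the left half (which an even power does not see), the
moment is a sum of two one-sided integrals `∫₀^∞ y ^ r * exp (-(y / m) ^ α)` with scales
`m = √2 (1 ± ε) σ`, and the substitution `u = (y / m) ^ α` turns each into
`m ^ (r + 1) * Γ((r + 1) / α) / α`.
-/

open Set

section GammaIntegrals

variable {p q m : ℝ}

theorem rpow_mul_exp_neg_div_rpow_eqOn (hm : 0 < m) :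
    EqOn (fun x : ℝ => x ^ q * exp (-((x / m) ^ p)))
      (fun x => x ^ q * exp (-(m ^ p)⁻¹ * x ^ p)) (Ioi 0) := by
  intro x hx
  dsimp only
  rw [div_rpow hx.out.le hm.le, neg_mul, div_eq_inv_mul]

theorem integrableOn_rpow_mul_exp_neg_div_rpow (hq : -1 < q) (hp : 0 < p) (hm : 0 < m) :
    IntegrableOn (fun x : ℝ => x ^ q * exp (-((x / m) ^ p))) (Ioi 0) :=
  (integrableOn_rpow_mul_exp_neg_mul_rpow hq hp (by positivity)).congr_fun
    (rpow_mul_exp_neg_div_rpow_eqOn hm).symm measurableSet_Ioi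

theorem integral_rpow_mul_exp_neg_div_rpow (hp : 0 < p) (hq : -1 < q) (hm : 0 < m) :
    ∫ x in Ioi (0 : ℝ), x ^ q * exp (-((x / m) ^ p)) =
      m ^ (q + 1) * Gamma ((q + 1) / p) / p := by
  rw [setIntegral_congr_fun measurableSet_Ioi (rpow_mul_exp_neg_div_rpow_eqOn hm),
    integral_rpow_mul_exp_neg_mul_rpow hp hq (by positivity), ← rpow_neg hm.le,
    ← rpow_mul hm.le, show -p * (-(q + 1) / p) = q + 1 by field_simp]
  ring

end GammaIntegrals

theorem integral_eq_integral_Ioi_comp_neg_add_integral_Ioi {E : Type*} [NormedAddCommGroup E]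
    [NormedSpace ℝ E] {f : ℝ → E} (hneg : IntegrableOn (fun x => f (-x)) (Ioi 0))
    (hpos : IntegrableOn f (Ioi 0)) :
    ∫ x, f x = (∫ x in Ioi 0, f (-x)) + ∫ x in Ioi 0, f x := by
  have hIic : IntegrableOn f (Iic 0) := by
    simpa using ((integrableOn_Ici_iff_integrableOn_Ioi (by simp)).2 hneg).comp_neg
  rw [← intervalIntegral.integral_Iic_add_Ioi hIic hpos, integral_comp_neg_Ioi 0 f, neg_zero]

section ESEP

variable {θ σ ε α y q : ℝ}

theorem esepPDF_add_of_nonneg (hy : 0 ≤ y) :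
    esepPDF θ σ ε α (θ + y) = α / (2 * √2 * σ * Gamma (1 / α)) *
      exp (-((y / (√2 * (1 - ε) * σ)) ^ α)) := by
  rw [esepPDF, if_neg (by linarith), add_sub_cancel_left]

theorem esepPDF_sub_of_pos (hy : 0 < y) :
    esepPDF θ σ ε α (θ - y) = esepPDF θ σ (-ε) α (θ + y) := by
  rw [esepPDF_add_of_nonneg hy.le, esepPDF, if_pos (by linarith), sub_sub_cancel, sub_neg_eq_add]

theorem rpow_mul_esepPDF_add_eqOn :
    EqOn (fun y => y ^ q * esepPDF θ σ ε α (θ + y))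
      (fun y => α / (2 * √2 * σ * Gamma (1 / α)) *
        (y ^ q * exp (-((y / (√2 * (1 - ε) * σ)) ^ α)))) (Ioi 0) := by
  intro y hy
  simp only [esepPDF_add_of_nonneg (le_of_lt hy)]
  ring

theorem integrableOn_rpow_mul_esepPDF_add (hσ : 0 < σ) (hε : ε < 1) (hα : 0 < α)
    (hq : -1 < q) :
    IntegrableOn (fun y => y ^ q * esepPDF θ σ ε α (θ + y)) (Ioi 0) := by
  have hm : 0 < √2 * (1 - ε) * σ := by have := sub_pos.2 hε; positivity
  exact IntegrableOn.congr_fun ((integrableOn_rpow_mul_exp_neg_div_rpow hq hα hm).const_mul _)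
    rpow_mul_esepPDF_add_eqOn.symm measurableSet_Ioi

theorem integral_rpow_mul_esepPDF_add (hσ : 0 < σ) (hε : ε < 1) (hα : 0 < α) (hq : -1 < q) :
    ∫ y in Ioi 0, y ^ q * esepPDF θ σ ε α (θ + y) =
      2 ^ (q / 2) * σ ^ q * (1 - ε) ^ (q + 1) * Gamma ((q + 1) / α) / (2 * Gamma (1 / α)) := by
  have h1ε : 0 < 1 - ε := sub_pos.2 hε
  have hsqrt : √2 ^ (q + 1) = 2 ^ (q / 2) * √2 := by
    rw [rpow_add_one (by positivity), sqrt_eq_rpow, ← rpow_mul zero_le_two, one_div_mul_eq_div]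
  rw [setIntegral_congr_fun measurableSet_Ioi rpow_mul_esepPDF_add_eqOn, integral_const_mul,
    integral_rpow_mul_exp_neg_div_rpow hα hq (by positivity),
    mul_rpow (by positivity) hσ.le, mul_rpow (by positivity) h1ε.le, hsqrt,
    rpow_add_one hσ.ne']
  field_simp

end ESEP

theorem esep_central_moment_general (θ σ ε α : ℝ) (hσ : 0 < σ) (hε : ε ∈ Set.Ioo (-1 : ℝ) 1)
    (hα : 0 < α) (r : ℕ) (hre : Even r) :
    ∫ x : ℝ, (x - θ) ^ r * esepPDF θ σ ε α x =
      (2 : ℝ) ^ ((r : ℝ) / 2) * σ ^ r * Real.Gamma (((r : ℝ) + 1) / α) *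
        ((1 + ε) ^ (r + 1) + (1 - ε) ^ (r + 1)) / (2 * Real.Gamma (1 / α)) := by
  obtain ⟨hε₁, hε₂⟩ := hε
  have hε₁' : -ε < 1 := by linarith
  have hr : (-1 : ℝ) < r := by linarith [r.cast_nonneg (α := ℝ)]
  set f : ℝ → ℝ := fun y => y ^ r * esepPDF θ σ ε α (θ + y)
  have hf : EqOn f (fun y => y ^ (r : ℝ) * esepPDF θ σ ε α (θ + y)) (Ioi 0) := fun y _ => by
    simp only [f, rpow_natCast]
  have hf_neg : EqOn (fun y => f (-y)) (fun y => y ^ (r : ℝ) * esepPDF θ σ (-ε) α (θ + y))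
      (Ioi 0) := fun y hy => by
    simp only [f, hre.neg_pow, ← sub_eq_add_neg, esepPDF_sub_of_pos hy, rpow_natCast]
  calc ∫ x, (x - θ) ^ r * esepPDF θ σ ε α x = ∫ x, f (x - θ) := by
        simp only [f, add_sub_cancel]
    _ = ∫ y, f y := integral_sub_right_eq_self f θ
    _ = (∫ y in Ioi 0, f (-y)) + ∫ y in Ioi 0, f y :=
      integral_eq_integral_Ioi_comp_neg_add_integral_Ioi
        ((integrableOn_rpow_mul_esepPDF_add hσ hε₁' hα hr).congr_fun hf_neg.symm
          measurableSet_Ioi)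
        ((integrableOn_rpow_mul_esepPDF_add hσ hε₂ hα hr).congr_fun hf.symm measurableSet_Ioi)
    _ = _ := by
      rw [setIntegral_congr_fun measurableSet_Ioi hf_neg,
        setIntegral_congr_fun measurableSet_Ioi hf,
        integral_rpow_mul_esepPDF_add hσ hε₁' hα hr,
        integral_rpow_mul_esepPDF_add hσ hε₂ hα hr,
        sub_neg_eq_add]
      norm_cast
      ring

theorem esep_central_moment (θ σ ε α : ℝ) (hσ : 0 < σ) (hε : ε ∈ Set.Ioo (-1 : ℝ) 1)
    (hα : 0 < α) (r : ℕ) (hr : 0 < r) (hre : Even r) :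
    ∫ x : ℝ, (x - θ) ^ r * esepPDF θ σ ε α x =
      (2 : ℝ) ^ ((r : ℝ) / 2) * σ ^ r * Real.Gamma (((r : ℝ) + 1) / α) *
        ((1 + ε) ^ (r + 1) + (1 - ε) ^ (r + 1)) / (2 * Real.Gamma (1 / α)) :=
  esep_central_moment_general θ σ ε α hσ hε hα r hre
end

section
/- The ESt location score function ψ_θ(x) = (ν+1)x / (ν(1−sign(x)ε)² + x²) satisfies lim_{x→±∞} ψ_θ(x) = 0, the scale score ψ_σ(x) = (ν+1)x²/(ν(1−sign(x)ε)² + x²) − 1 satisfies lim_{x→±∞} ψ_σ(x) = ν, and the skewness score ψ_ε(x) = (ν+1)x² sign(x)/(ν(1−sign(x)ε)³ + (1−sign(x)ε)x²) satisfies lim_{x→+∞} ψ_ε(x) = (ν+1)/(1−ε). In particular all three are bounded on ℝ. -/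
open Real Filter Topology

/-- sign(x) = 1 for x ≥ 0, -1 for x < 0. -/
noncomputable def sgn (x : ℝ) : ℝ := if x < 0 then -1 else 1

/-- ESt location score. -/
noncomputable def estPsiTheta (ν ε : ℝ) (x : ℝ) : ℝ :=
  (ν + 1) * x / (ν * (1 - sgn x * ε) ^ 2 + x ^ 2)

/-- ESt scale score. -/
noncomputable def estPsiSigma (ν ε : ℝ) (x : ℝ) : ℝ :=
  (ν + 1) * x ^ 2 / (ν * (1 - sgn x * ε) ^ 2 + x ^ 2) - 1

/-- ESt skewness score. -/
noncomputable def estPsiEps (ν ε : ℝ) (x : ℝ) : ℝ :=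
  (ν + 1) * x ^ 2 * sgn x / (ν * (1 - sgn x * ε) ^ 3 + (1 - sgn x * ε) * x ^ 2)

/-!
On each half-line `sgn` is constant, so every score is a rational function of `x` of the form
`A * x / (c + x ^ 2)` or `A * x ^ 2 / (c + x ^ 2)` with `c = ν (1 ∓ ε) ^ 2 > 0`; these tend to `0`
and `A` as `|x| → ∞` (divide by `x ^ 2`). Boundedness is uniform in the sign because
`1 - sgn x * ε ≥ 1 - |ε| > 0`: by AM-GM `2 √c |x| ≤ c + x ^ 2`, and `x ^ 2 / (c + x ^ 2) ≤ 1`.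
-/

open Bornology IsOrderBornology

section RationalLimits

variable {𝕜 : Type*} [NormedField 𝕜]

theorem tendsto_sq_div_const_add_sq_cobounded (c : 𝕜) :
    Tendsto (fun x : 𝕜 => x ^ 2 / (c + x ^ 2)) (cobounded 𝕜) (𝓝 1) := by
  have h : Tendsto (fun x : 𝕜 => (c * x⁻¹ ^ 2 + 1)⁻¹) (cobounded 𝕜) (𝓝 1) := by
    simpa using ((tendsto_inv₀_cobounded.pow 2).const_mul c |>.add_const 1).inv₀ (by simp)
  refine h.congr' ?_
  filter_upwards [eventually_ne_cobounded 0] with x hx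
  field_simp

theorem tendsto_div_const_add_sq_cobounded (c : 𝕜) :
    Tendsto (fun x : 𝕜 => x / (c + x ^ 2)) (cobounded 𝕜) (𝓝 0) := by
  have h := (tendsto_inv₀_cobounded (α := 𝕜)).mul (tendsto_sq_div_const_add_sq_cobounded c)
  rw [zero_mul] at h
  refine h.congr' ?_
  filter_upwards [eventually_ne_cobounded 0] with x hx
  field_simp

end RationalLimits

section Bounds

variable {A x : ℝ}

theorem abs_mul_div_add_sq_le {c₀ c : ℝ} (hA : 0 ≤ A) (hc₀ : 0 < c₀) (hc : c₀ ≤ c) :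
    |A * x / (c + x ^ 2)| ≤ A / (2 * √c₀) := by
  have hd : 0 < c + x ^ 2 := add_pos_of_pos_of_nonneg (hc₀.trans_le hc) (sq_nonneg x)
  have hamgm : 2 * √c₀ * |x| ≤ c + x ^ 2 := by
    nlinarith [two_mul_le_add_sq (√c₀) |x|, sq_sqrt hc₀.le, sq_abs x]
  rw [abs_div, abs_mul, abs_of_nonneg hA, abs_of_pos hd,
    div_le_div_iff₀ hd (by positivity)]
  nlinarith

theorem abs_mul_sq_div_add_sq_sub_one_le {c : ℝ} (hA : 0 ≤ A) (hc : 0 ≤ c) :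
    |A * x ^ 2 / (c + x ^ 2) - 1| ≤ A + 1 := by
  have hlo : 0 ≤ A * x ^ 2 / (c + x ^ 2) := by positivity
  have hhi : A * x ^ 2 / (c + x ^ 2) ≤ A :=
    div_le_of_le_mul₀ (by positivity) hA (by nlinarith)
  rw [abs_le]
  constructor <;> linarith

theorem abs_mul_sq_mul_div_le {b a₀ a s : ℝ} (hA : 0 ≤ A) (hb : 0 ≤ b) (ha₀ : 0 < a₀)
    (ha : a₀ ≤ a) (hs : |s| = 1) :
    |A * x ^ 2 * s / (b * a ^ 3 + a * x ^ 2)| ≤ A / a₀ := by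
  have hd : 0 ≤ a * (b * a ^ 2 + x ^ 2) := by
    have : 0 ≤ a := ha₀.le.trans ha
    positivity
  rw [show b * a ^ 3 + a * x ^ 2 = a * (b * a ^ 2 + x ^ 2) by ring, abs_div, abs_mul, hs,
    mul_one, abs_mul, abs_of_nonneg hA, abs_sq, abs_of_nonneg hd]
  refine div_le_of_le_mul₀ hd (by positivity) ?_
  calc A * x ^ 2 ≤ A * (b * a ^ 2 + x ^ 2) := by gcongr; nlinarith [sq_nonneg a]
    _ = A / a₀ * a₀ * (b * a ^ 2 + x ^ 2) := by field_simp
    _ ≤ A / a₀ * a * (b * a ^ 2 + x ^ 2) := by gcongr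
    _ = _ := by ring

end Bounds

theorem sgn_of_nonneg {x : ℝ} (hx : 0 ≤ x) : sgn x = 1 := if_neg hx.not_gt

theorem sgn_of_neg {x : ℝ} (hx : x < 0) : sgn x = -1 := if_pos hx

theorem abs_sgn (x : ℝ) : |sgn x| = 1 := by
  unfold sgn; split_ifs <;> simp

theorem sgn_mul_le_abs (x ε : ℝ) : sgn x * ε ≤ |ε| :=
  (le_abs_self _).trans_eq (by rw [abs_mul, abs_sgn, one_mul])

section ESt

variable {ν ε x : ℝ}

theorem estPsiTheta_of_nonneg (hx : 0 ≤ x) :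
    estPsiTheta ν ε x = (ν + 1) * (x / (ν * (1 - ε) ^ 2 + x ^ 2)) := by
  rw [estPsiTheta, sgn_of_nonneg hx, one_mul, mul_div_assoc]

theorem estPsiTheta_of_neg (hx : x < 0) :
    estPsiTheta ν ε x = (ν + 1) * (x / (ν * (1 + ε) ^ 2 + x ^ 2)) := by
  rw [estPsiTheta, sgn_of_neg hx, neg_one_mul, sub_neg_eq_add, mul_div_assoc]

theorem estPsiSigma_of_nonneg (hx : 0 ≤ x) :
    estPsiSigma ν ε x = (ν + 1) * (x ^ 2 / (ν * (1 - ε) ^ 2 + x ^ 2)) - 1 := by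
  rw [estPsiSigma, sgn_of_nonneg hx, one_mul, mul_div_assoc]

theorem estPsiSigma_of_neg (hx : x < 0) :
    estPsiSigma ν ε x = (ν + 1) * (x ^ 2 / (ν * (1 + ε) ^ 2 + x ^ 2)) - 1 := by
  rw [estPsiSigma, sgn_of_neg hx, neg_one_mul, sub_neg_eq_add, mul_div_assoc]

theorem estPsiEps_of_nonneg (hx : 0 ≤ x) :
    estPsiEps ν ε x = (ν + 1) / (1 - ε) * (x ^ 2 / (ν * (1 - ε) ^ 2 + x ^ 2)) := by
  rw [estPsiEps, sgn_of_nonneg hx, one_mul, mul_one, div_mul_div_comm]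
  ring_nf

theorem abs_estPsiTheta_le (hν : 0 < ν) (hε : |ε| < 1) (x : ℝ) :
    |estPsiTheta ν ε x| ≤ (ν + 1) / (2 * √(ν * (1 - |ε|) ^ 2)) := by
  have ha₀ : 0 < 1 - |ε| := sub_pos.2 hε
  exact abs_mul_div_add_sq_le (by linarith) (by positivity) (by gcongr; exact sgn_mul_le_abs x ε)

theorem abs_estPsiSigma_le (hν : 0 ≤ ν) (x : ℝ) : |estPsiSigma ν ε x| ≤ ν + 2 := by
  have := abs_mul_sq_div_add_sq_sub_one_le (x := x) (c := ν * (1 - sgn x * ε) ^ 2)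
    (by linarith : 0 ≤ ν + 1) (by positivity)
  rwa [add_assoc, one_add_one_eq_two] at this

theorem abs_estPsiEps_le (hν : 0 ≤ ν) (hε : |ε| < 1) (x : ℝ) :
    |estPsiEps ν ε x| ≤ (ν + 1) / (1 - |ε|) :=
  abs_mul_sq_mul_div_le (by linarith) hν (sub_pos.2 hε)
    (by linarith [sgn_mul_le_abs x ε]) (abs_sgn x)

theorem tendsto_estPsiTheta_atTop : Tendsto (estPsiTheta ν ε) atTop (𝓝 0) := by
  have h := (tendsto_div_const_add_sq_cobounded (ν * (1 - ε) ^ 2)).mono_left atTop_le_cobounded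
  rw [← mul_zero (ν + 1)]
  exact (h.const_mul _).congr' <|
    (eventually_ge_atTop 0).mono fun x hx => (estPsiTheta_of_nonneg hx).symm

theorem tendsto_estPsiTheta_atBot : Tendsto (estPsiTheta ν ε) atBot (𝓝 0) := by
  have h := (tendsto_div_const_add_sq_cobounded (ν * (1 + ε) ^ 2)).mono_left atBot_le_cobounded
  rw [← mul_zero (ν + 1)]
  exact (h.const_mul _).congr' <|
    (eventually_lt_atBot 0).mono fun x hx => (estPsiTheta_of_neg hx).symm

theorem tendsto_estPsiSigma_atTop : Tendsto (estPsiSigma ν ε) atTop (𝓝 ν) := by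
  have h := (tendsto_sq_div_const_add_sq_cobounded (ν * (1 - ε) ^ 2)).mono_left atTop_le_cobounded
  have h' := (h.const_mul (ν + 1)).sub_const 1
  rw [mul_one, add_sub_cancel_right] at h'
  exact h'.congr' <| (eventually_ge_atTop 0).mono fun x hx => (estPsiSigma_of_nonneg hx).symm

theorem tendsto_estPsiSigma_atBot : Tendsto (estPsiSigma ν ε) atBot (𝓝 ν) := by
  have h := (tendsto_sq_div_const_add_sq_cobounded (ν * (1 + ε) ^ 2)).mono_left atBot_le_cobounded
  have h' := (h.const_mul (ν + 1)).sub_const 1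
  rw [mul_one, add_sub_cancel_right] at h'
  exact h'.congr' <| (eventually_lt_atBot 0).mono fun x hx => (estPsiSigma_of_neg hx).symm

theorem tendsto_estPsiEps_atTop : Tendsto (estPsiEps ν ε) atTop (𝓝 ((ν + 1) / (1 - ε))) := by
  have h := (tendsto_sq_div_const_add_sq_cobounded (ν * (1 - ε) ^ 2)).mono_left atTop_le_cobounded
  rw [← mul_one ((ν + 1) / (1 - ε))]
  exact (h.const_mul _).congr' <|
    (eventually_ge_atTop 0).mono fun x hx => (estPsiEps_of_nonneg hx).symm

end ESt

theorem est_scores_bounded (ν ε : ℝ) (hν : 0 < ν) (hε : ε ∈ Set.Ioo (-1 : ℝ) 1) :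
    Tendsto (estPsiTheta ν ε) atTop (𝓝 0) ∧
    Tendsto (estPsiTheta ν ε) atBot (𝓝 0) ∧
    Tendsto (estPsiSigma ν ε) atTop (𝓝 ν) ∧
    Tendsto (estPsiSigma ν ε) atBot (𝓝 ν) ∧
    Tendsto (estPsiEps ν ε) atTop (𝓝 ((ν + 1) / (1 - ε))) ∧
    (∃ M : ℝ, ∀ x : ℝ,
      |estPsiTheta ν ε x| ≤ M ∧ |estPsiSigma ν ε x| ≤ M ∧ |estPsiEps ν ε x| ≤ M) := by
  have hε' : |ε| < 1 := abs_lt.2 hε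
  refine ⟨tendsto_estPsiTheta_atTop, tendsto_estPsiTheta_atBot, tendsto_estPsiSigma_atTop,
    tendsto_estPsiSigma_atBot, tendsto_estPsiEps_atTop, ?_⟩
  refine ⟨max ((ν + 1) / (2 * √(ν * (1 - |ε|) ^ 2))) (max (ν + 2) ((ν + 1) / (1 - |ε|))),
    fun x => ⟨?_, ?_, ?_⟩⟩
  · exact (abs_estPsiTheta_le hν hε' x).trans (le_max_left _ _)
  · exact (abs_estPsiSigma_le hν.le x).trans ((le_max_left _ _).trans (le_max_right _ _))
  · exact (abs_estPsiEps_le hν.le hε' x).trans ((le_max_right _ _).trans (le_max_right _ _))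
end

section
/- For α > 0 and q > 0, ∫₀^∞ (1+y^α)^{−q−1/α} log(1+y^α) dy = −Γ(1/α)Γ(q)(ψ(q) − ψ(q+1/α)) / (α Γ(q+1/α)), where ψ is the digamma function. -/
/-!
The substitution `x = (1 + y ^ α)⁻¹` turns the integral into
`-(1/α) ∫₀¹ log x · x ^ (q - 1) (1 - x) ^ (1/α - 1) dx`, the derivative at `s = q` of the Beta
integral `B(s, 1/α) = Γ(s) Γ(1/α) / Γ(s + 1/α)`. Differentiating the right-hand side gives
`B(q, 1/α) (ψ(q) - ψ(q + 1/α))`; differentiation under the integral sign is justified by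
domination, since `|log x| ≤ x ^ (-t) / t` on `(0, 1]`.
-/

open Real MeasureTheory

/-- The digamma function Γ'/Γ. -/
noncomputable def digamma (x : ℝ) : ℝ := deriv Real.Gamma x / Real.Gamma x

open Set

section Beta

variable {a b : ℝ}

lemma ofReal_rpow_mul_one_sub_rpow {x : ℝ} (hx₀ : 0 ≤ x) (hx₁ : x ≤ 1) :
    ((x ^ (a - 1) * (1 - x) ^ (b - 1) : ℝ) : ℂ) =
      (x : ℂ) ^ ((a : ℂ) - 1) * (1 - (x : ℂ)) ^ ((b : ℂ) - 1) := by
  push_cast [Complex.ofReal_cpow hx₀, Complex.ofReal_cpow (sub_nonneg.2 hx₁)]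
  rfl

lemma integrableOn_rpow_mul_one_sub_rpow (ha : 0 < a) (hb : 0 < b) :
    IntegrableOn (fun x : ℝ => x ^ (a - 1) * (1 - x) ^ (b - 1)) (Ioo 0 1) := by
  have h := (Complex.betaIntegral_convergent (u := a) (v := b) (by simpa) (by simpa)).congr_uIoo
    (g := fun x => ((x ^ (a - 1) * (1 - x) ^ (b - 1) : ℝ) : ℂ)) fun x hx => by
      rw [uIoo_of_le zero_le_one] at hx
      exact (ofReal_rpow_mul_one_sub_rpow hx.1.le hx.2.le).symm
  have hre : IntegrableOn (fun x : ℝ => x ^ (a - 1) * (1 - x) ^ (b - 1)) (Ioc 0 1) := by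
    simpa [IntegrableOn] using h.1.re
  exact hre.mono_set Ioo_subset_Ioc_self

lemma integral_rpow_mul_one_sub_rpow (ha : 0 < a) (hb : 0 < b) :
    ∫ x in Ioo 0 1, x ^ (a - 1) * (1 - x) ^ (b - 1) = Gamma a * Gamma b / Gamma (a + b) := by
  have h := Complex.betaIntegral_eq_Gamma_mul_div a b (by simpa) (by simpa)
  rw [Complex.betaIntegral, ← intervalIntegral.integral_congr
      (f := fun x : ℝ => ((x ^ (a - 1) * (1 - x) ^ (b - 1) : ℝ) : ℂ)) fun x hx => by
        rw [uIcc_of_le zero_le_one] at hx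
        exact ofReal_rpow_mul_one_sub_rpow hx.1 hx.2, intervalIntegral.integral_ofReal,
    ← Complex.ofReal_add, Complex.Gamma_ofReal, Complex.Gamma_ofReal,
    Complex.Gamma_ofReal] at h
  rw [← integral_Ioc_eq_integral_Ioo, ← intervalIntegral.integral_of_le zero_le_one]
  exact_mod_cast h

lemma abs_log_mul_rpow_le {x s t : ℝ} (hx₀ : 0 < x) (hx₁ : x ≤ 1) (ht : 0 < t) :
    |log x| * x ^ s ≤ x ^ (s - t) / t := by
  have h := (abs_log_mul_self_rpow_lt x t hx₀ hx₁ ht).le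
  rw [abs_mul, abs_of_pos (rpow_pos_of_pos hx₀ t)] at h
  calc |log x| * x ^ s = |log x| * x ^ t * x ^ (s - t) := by
        rw [mul_assoc, ← rpow_add hx₀, add_sub_cancel]
    _ ≤ 1 / t * x ^ (s - t) := by gcongr
    _ = x ^ (s - t) / t := by ring

lemma hasDerivAt_integral_rpow_mul_one_sub_rpow (ha : 0 < a) (hb : 0 < b) :
    HasDerivAt (fun s => ∫ x in Ioo 0 1, x ^ (s - 1) * (1 - x) ^ (b - 1))
      (∫ x in Ioo 0 1, log x * (x ^ (a - 1) * (1 - x) ^ (b - 1))) a := by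
  have hbound : ∀ x ∈ Ioo (0 : ℝ) 1, ∀ s ∈ Ioi (a / 2),
      ‖log x * (x ^ (s - 1) * (1 - x) ^ (b - 1))‖ ≤
        4 / a * (x ^ (a / 4 - 1) * (1 - x) ^ (b - 1)) := by
    intro x ⟨hx₀, hx₁⟩ s hs
    have h1x : 0 ≤ (1 - x) ^ (b - 1) := rpow_nonneg (sub_nonneg.2 hx₁.le) _
    rw [norm_mul, norm_mul, norm_of_nonneg (rpow_pos_of_pos hx₀ _).le, norm_of_nonneg h1x,
      Real.norm_eq_abs, ← mul_assoc]
    calc |log x| * x ^ (s - 1) * (1 - x) ^ (b - 1)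
        ≤ x ^ (s - 1 - a / 4) / (a / 4) * (1 - x) ^ (b - 1) := by
          gcongr; exact abs_log_mul_rpow_le hx₀ hx₁.le (by positivity)
      _ ≤ x ^ (a / 4 - 1) / (a / 4) * (1 - x) ^ (b - 1) := by
          gcongr ?_ / _ * _
          exact rpow_le_rpow_of_exponent_ge hx₀ hx₁.le (by linarith [mem_Ioi.1 hs])
      _ = 4 / a * (x ^ (a / 4 - 1) * (1 - x) ^ (b - 1)) := by field_simp
  have hderiv : ∀ x ∈ Ioo (0 : ℝ) 1, ∀ s : ℝ,
      HasDerivAt (fun s => x ^ (s - 1) * (1 - x) ^ (b - 1))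
        (log x * (x ^ (s - 1) * (1 - x) ^ (b - 1))) s := fun x hx s => by
    simpa [mul_assoc] using
      (((hasDerivAt_id s).sub_const 1).const_rpow hx.1).mul_const ((1 - x) ^ (b - 1))
  exact (hasDerivAt_integral_of_dominated_loc_of_deriv_le (μ := volume.restrict (Ioo 0 1))
    (F := fun s x => x ^ (s - 1) * (1 - x) ^ (b - 1)) (Ioi_mem_nhds (half_lt_self ha))
    (.of_forall fun s => by fun_prop) (integrableOn_rpow_mul_one_sub_rpow ha hb) (by fun_prop)
    ((ae_restrict_iff' measurableSet_Ioo).2 (.of_forall hbound))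
    ((integrableOn_rpow_mul_one_sub_rpow (by positivity) hb).const_mul _)
    ((ae_restrict_iff' measurableSet_Ioo).2 (.of_forall fun x hx s _ => hderiv x hx s))).2

lemma hasDerivAt_Gamma_of_pos {s : ℝ} (hs : 0 < s) :
    HasDerivAt Gamma (Gamma s * digamma s) s := by
  rw [digamma, mul_div_cancel₀ _ (Gamma_pos_of_pos hs).ne']
  exact (differentiableAt_Gamma fun m => by
    linarith [(Nat.cast_nonneg m : (0 : ℝ) ≤ m)]).hasDerivAt

lemma hasDerivAt_Gamma_mul_Gamma_div_Gamma_add (ha : 0 < a) (hb : 0 < b) :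
    HasDerivAt (fun s => Gamma s * Gamma b / Gamma (s + b))
      (Gamma a * Gamma b / Gamma (a + b) * (digamma a - digamma (a + b))) a := by
  have hab := (Gamma_pos_of_pos (add_pos ha hb)).ne'
  refine (((hasDerivAt_Gamma_of_pos ha).mul_const (Gamma b)).div
    ((hasDerivAt_Gamma_of_pos (add_pos ha hb)).comp_add_const a b) hab).congr_deriv ?_
  field_simp

lemma integral_log_mul_rpow_mul_one_sub_rpow (ha : 0 < a) (hb : 0 < b) :
    ∫ x in Ioo 0 1, log x * (x ^ (a - 1) * (1 - x) ^ (b - 1)) =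
      Gamma a * Gamma b / Gamma (a + b) * (digamma a - digamma (a + b)) :=
  (hasDerivAt_integral_rpow_mul_one_sub_rpow ha hb).unique <|
    (hasDerivAt_Gamma_mul_Gamma_div_Gamma_add ha hb).congr_of_eventuallyEq <|
      (eventually_gt_nhds ha).mono fun _ hs => integral_rpow_mul_one_sub_rpow hs hb

end Beta

section OneAddRpow

variable {α : ℝ}

lemma one_add_inv_sub_one_rpow_inv_rpow (hα : 0 < α) {x : ℝ} (hx : x ∈ Ioo (0 : ℝ) 1) :
    1 + ((x⁻¹ - 1) ^ α⁻¹) ^ α = x⁻¹ := by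
  rw [rpow_inv_rpow (sub_nonneg.2 (one_le_inv₀ hx.1 |>.2 hx.2.le)) hα.ne', add_sub_cancel]

lemma image_inv_sub_one_rpow_inv_Ioo (hα : 0 < α) :
    (fun x : ℝ => (x⁻¹ - 1) ^ α⁻¹) '' Ioo 0 1 = Ioi 0 := by
  refine Subset.antisymm ?_ fun y (hy : 0 < y) => ⟨(1 + y ^ α)⁻¹, ?_, ?_⟩
  · rintro _ ⟨x, hx, rfl⟩
    exact rpow_pos_of_pos (sub_pos.2 (one_lt_inv₀ hx.1 |>.2 hx.2)) _
  · have := rpow_pos_of_pos hy α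
    exact ⟨by positivity, inv_lt_one_of_one_lt₀ (by linarith)⟩
  · simp only [inv_inv, add_sub_cancel_left]
    exact rpow_rpow_inv hy.le hα.ne'

lemma hasDerivAt_inv_sub_one_rpow_inv {x : ℝ} (hx : x ∈ Ioo (0 : ℝ) 1) :
    HasDerivAt (fun x : ℝ => (x⁻¹ - 1) ^ α⁻¹)
      (-(α⁻¹ * x ^ (-α⁻¹ - 1) * (1 - x) ^ (α⁻¹ - 1))) x := by
  obtain ⟨hx₀, hx₁⟩ := hx
  have hsub : x⁻¹ - 1 = (1 - x) * x⁻¹ := by field_simp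
  refine (((hasDerivAt_inv hx₀.ne').sub_const 1).rpow_const
    (Or.inl (sub_pos.2 (one_lt_inv₀ hx₀ |>.2 hx₁)).ne')).congr_deriv ?_
  rw [hsub, mul_rpow (sub_nonneg.2 hx₁.le) (inv_nonneg.2 hx₀.le), inv_rpow hx₀.le,
    show -α⁻¹ - 1 = -(α⁻¹ - 1) + (-2) by ring, rpow_add hx₀, rpow_neg hx₀.le, rpow_neg hx₀.le,
    rpow_two]
  ring

lemma integral_Ioi_comp_one_add_rpow {E : Type*} [NormedAddCommGroup E] [NormedSpace ℝ E]
    (hα : 0 < α) (g : ℝ → E) :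
    ∫ y in Ioi 0, g (1 + y ^ α) =
      ∫ x in Ioo 0 1, (α⁻¹ * x ^ (-α⁻¹ - 1) * (1 - x) ^ (α⁻¹ - 1)) • g x⁻¹ := by
  have hinj : InjOn (fun x : ℝ => (x⁻¹ - 1) ^ α⁻¹) (Ioo 0 1) := fun x hx y hy hxy =>
    inv_injective <| (one_add_inv_sub_one_rpow_inv_rpow hα hx).symm.trans <|
      (congrArg (fun t => 1 + t ^ α) hxy).trans (one_add_inv_sub_one_rpow_inv_rpow hα hy)
  rw [← image_inv_sub_one_rpow_inv_Ioo hα, integral_image_eq_integral_abs_deriv_smul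
    measurableSet_Ioo (fun x hx => (hasDerivAt_inv_sub_one_rpow_inv hx).hasDerivWithinAt)
    hinj]
  refine setIntegral_congr_fun measurableSet_Ioo fun x hx => ?_
  have : 0 ≤ α⁻¹ * x ^ (-α⁻¹ - 1) * (1 - x) ^ (α⁻¹ - 1) := by
    have := hx.1; have := sub_pos.2 hx.2; positivity
  simp only [abs_neg, abs_of_nonneg this, one_add_inv_sub_one_rpow_inv_rpow hα hx]

end OneAddRpow

theorem log_beta_type_integral (α q : ℝ) (hα : 0 < α) (hq : 0 < q) :
    ∫ y in Set.Ioi (0 : ℝ), (1 + y ^ α) ^ (-q - 1 / α) * Real.log (1 + y ^ α) =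
      -(Real.Gamma (1 / α) * Real.Gamma q * (digamma q - digamma (q + 1 / α))) /
        (α * Real.Gamma (q + 1 / α)) := by
  rw [integral_Ioi_comp_one_add_rpow hα (fun t => t ^ (-q - 1 / α) * log t)]
  have hintegrand : EqOn
      (fun x => (α⁻¹ * x ^ (-α⁻¹ - 1) * (1 - x) ^ (α⁻¹ - 1)) • (x⁻¹ ^ (-q - 1 / α) * log x⁻¹))
      (fun x => -α⁻¹ * (log x * (x ^ (q - 1) * (1 - x) ^ (1 / α - 1)))) (Ioo 0 1) :=
    fun x hx => by
      simp only [smul_eq_mul, log_inv, one_div]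
      rw [inv_rpow hx.1.le, ← rpow_neg hx.1.le, show -(-q - α⁻¹) = q + α⁻¹ by ring]
      have : x ^ (-α⁻¹ - 1) * x ^ (q + α⁻¹) = x ^ (q - 1) := by
        rw [← rpow_add hx.1]; ring_nf
      linear_combination (-(α⁻¹ * log x * (1 - x) ^ (α⁻¹ - 1))) * this
  rw [setIntegral_congr_fun measurableSet_Ioo hintegrand, integral_const_mul,
    integral_log_mul_rpow_mul_one_sub_rpow hq (by positivity)]
  field_simp
end
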